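/- Suppose on an interval [b,T₀] ⊆ (0,T₀] we have μ₁ ≤ c(t) ≤ μ₂ (μ₁ > 0), |c'(t)| ≤ K₀λ, and the equivalence ε₀·E_kov(t) ≤ E_tar(t) for the Tarama and Kovalevskyan energies of a solution u of u'' + λ²c(t)²u = 0. Then there is a constant M₃ > 0, depending only on μ₁, K₀, ε₀, such that E_tar'(t) ≤ (M₃/λ)·E_tar(t)·(|c''(t)| + |c'(t)|²) for all t ∈ (b,T₀), and hence E_tar(t) ≤ E_tar(b)·exp( (M₃/λ)·∫_b^{T₀} (|c''(s)| + |c'(s)|²) ds ). -/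

import Mathlib

/-!
Differentiating the Tarama energy along a solution, the equation cancels every term carrying
`λ²`, leaving a quadratic form in `(u, u')` whose coefficients are built from `c, c', c''`.
Since `|c'| ≤ K₀λ` and `2λ|u u'| ≤ E_kov`, that form is at most `(M/λ) E_kov (|c''| + |c'|²)`,
and `ε₀ E_kov ≤ E_tar` turns this into a linear differential inequality for `E_tar`,
which Grönwall's argument integrates.
-/

open Set MeasureTheory

lemma le_mul_exp_integral_of_hasDerivAt_le {f f' g : ℝ → ℝ} {a b : ℝ}
    (hf : ContinuousOn f (Icc a b)) (hf' : ∀ t ∈ Ioo a b, HasDerivAt f (f' t) t)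
    (hg : ContinuousOn g (Icc a b)) (hle : ∀ t ∈ Ioo a b, f' t ≤ g t * f t) :
    ∀ t ∈ Icc a b, f t ≤ f a * Real.exp (∫ s in a..t, g s) := by
  intro t ht
  have hab : a ≤ b := ht.1.trans ht.2
  set G : ℝ → ℝ := fun r => ∫ s in a..r, g s
  have hGc : ContinuousOn G (Icc a b) := by
    rw [← uIcc_of_le hab] at hg ⊢
    exact intervalIntegral.continuousOn_primitive_interval (hg.integrableOn_compact isCompact_uIcc)
  have hG : ∀ r ∈ Ioo a b, HasDerivAt G (g r) r := by
    intro r hr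
    have hgr : ContinuousAt g r := hg.continuousAt (Icc_mem_nhds hr.1 hr.2)
    refine intervalIntegral.integral_hasDerivAt_right ?_
      ((hg.mono Ioo_subset_Icc_self).stronglyMeasurableAtFilter isOpen_Ioo r hr) hgr
    exact (hg.mono (Icc_subset_Icc_right hr.2.le)).intervalIntegrable_of_Icc hr.1.le
  have hφ : ∀ r ∈ Ioo a b, HasDerivAt (fun r => f r * Real.exp (-G r))
      (Real.exp (-G r) * (f' r - g r * f r)) r :=
    fun r hr => ((hf' r hr).mul (hG r hr).neg.exp).congr_deriv (by simp only [Pi.neg_apply]; ring)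
  have hanti : AntitoneOn (fun r => f r * Real.exp (-G r)) (Icc a b) := by
    refine antitoneOn_of_hasDerivWithinAt_nonpos
      (f' := fun r => Real.exp (-G r) * (f' r - g r * f r)) (convex_Icc a b) (hf.mul hGc.neg.rexp) (fun r hr => ?_) (fun r hr => ?_) <;>
      rw [interior_Icc] at hr
    · exact (hφ r hr).hasDerivWithinAt
    · exact mul_nonpos_of_nonneg_of_nonpos (Real.exp_pos _).le (sub_nonpos.2 (hle r hr))
  have key := hanti (left_mem_Icc.2 hab) ht ht.1
  simp only [G, intervalIntegral.integral_same, neg_zero, Real.exp_zero, mul_one] at key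
  calc f t = f t * Real.exp (-G t) * Real.exp (G t) := by
        rw [mul_assoc, ← Real.exp_add, neg_add_cancel, Real.exp_zero, mul_one]
    _ ≤ f a * Real.exp (G t) := by gcongr

lemma le_mul_exp_integral_of_hasDerivAt_le_of_nonneg {f f' g : ℝ → ℝ} {a b : ℝ}
    (hf : ContinuousOn f (Icc a b)) (hf' : ∀ t ∈ Ioo a b, HasDerivAt f (f' t) t)
    (hg : ContinuousOn g (Icc a b)) (hle : ∀ t ∈ Ioo a b, f' t ≤ g t * f t)
    (hg₀ : ∀ t ∈ Icc a b, 0 ≤ g t) (hfa : 0 ≤ f a) :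
    ∀ t ∈ Icc a b, f t ≤ f a * Real.exp (∫ s in a..b, g s) := by
  intro t ht
  refine (le_mul_exp_integral_of_hasDerivAt_le hf hf' hg hle t ht).trans ?_
  gcongr
  exact intervalIntegral.integral_mono_interval le_rfl ht.1 ht.2
    ((ae_restrict_mem measurableSet_Ioc).mono fun s hs => hg₀ s (Ioc_subset_Icc_self hs))
    (hg.intervalIntegrable_of_Icc (ht.1.trans ht.2))

/-- `E_tar(t) = taramaEnergy λ (c t) (c' t) (u t) (u' t)`; along a solution its derivative is
`taramaEnergyDeriv (c t) (c' t) (c'' t) (u t) (u' t)`. -/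
noncomputable def taramaEnergy (lam C P U V : ℝ) : ℝ :=
  V ^ 2 / C + lam ^ 2 * C * U ^ 2 + P ^ 2 * U ^ 2 / (4 * C ^ 3) + P * U * V / C ^ 2

noncomputable def taramaEnergyDeriv (C P Q U V : ℝ) : ℝ :=
  ((2 * C * P * Q - 3 * P ^ 3) * U ^ 2 + (4 * C ^ 2 * Q - 6 * C * P ^ 2) * (U * V)) / (4 * C ^ 4)

lemma mul_abs_quadratic_form_le {lam : ℝ} (hlam : 0 < lam) (α β U V : ℝ) :
    lam * |α * U ^ 2 + β * (U * V)| ≤ (|α| / lam + |β| / 2) * (V ^ 2 + lam ^ 2 * U ^ 2) := by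
  have hUV : 2 * lam * |U * V| ≤ V ^ 2 + lam ^ 2 * U ^ 2 := by
    rw [abs_mul, ← sq_abs U, ← sq_abs V]
    nlinarith [sq_nonneg (lam * |U| - |V|)]
  calc lam * |α * U ^ 2 + β * (U * V)|
      ≤ lam * (|α| * U ^ 2 + |β| * |U * V|) := by
        gcongr
        refine (abs_add_le _ _).trans_eq ?_
        rw [abs_mul, abs_mul, abs_of_nonneg (sq_nonneg U)]
    _ = |α| / lam * (lam ^ 2 * U ^ 2) + |β| / 2 * (2 * lam * |U * V|) := by
        field_simp
    _ ≤ (|α| / lam + |β| / 2) * (V ^ 2 + lam ^ 2 * U ^ 2) := by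
        rw [add_mul]
        gcongr
        nlinarith [sq_nonneg V, sq_nonneg (lam * U), abs_nonneg (U * V)]

lemma abs_taramaEnergyDeriv_numerator_le {μ₂ K₀ lam C P Q U V : ℝ} (hC₀ : 0 ≤ C) (hC : C ≤ μ₂)
    (hP : |P| ≤ K₀ * lam) (hlam : 0 < lam) :
    |(2 * C * P * Q - 3 * P ^ 3) * U ^ 2 + (4 * C ^ 2 * Q - 6 * C * P ^ 2) * (U * V)| ≤
      (2 * μ₂ + 3) * (K₀ + μ₂) / lam * (V ^ 2 + lam ^ 2 * U ^ 2) * (|Q| + |P| ^ 2) := by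
  have hK₀ : 0 ≤ K₀ := nonneg_of_mul_nonneg_left ((abs_nonneg P).trans hP) hlam
  have hμ₂ : 0 ≤ μ₂ := hC₀.trans hC
  have hα : |2 * C * P * Q - 3 * P ^ 3| / lam ≤ 2 * μ₂ * K₀ * |Q| + 3 * K₀ * |P| ^ 2 := by
    rw [div_le_iff₀ hlam]
    calc |2 * C * P * Q - 3 * P ^ 3| ≤ (2 * C * |Q| + 3 * |P| ^ 2) * |P| := by
          refine (abs_sub _ _).trans (le_of_eq ?_)
          simp only [abs_mul, abs_pow, abs_of_nonneg hC₀]; norm_num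
          linear_combination 3 * |P| * sq_abs P
      _ ≤ (2 * μ₂ * |Q| + 3 * |P| ^ 2) * (K₀ * lam) := by gcongr
      _ = _ := by ring
  have hβ : |4 * C ^ 2 * Q - 6 * C * P ^ 2| / 2 ≤ 2 * μ₂ ^ 2 * |Q| + 3 * μ₂ * |P| ^ 2 := by
    rw [div_le_iff₀ two_pos]
    calc |4 * C ^ 2 * Q - 6 * C * P ^ 2| ≤ 4 * C ^ 2 * |Q| + 6 * C * |P| ^ 2 := by
          refine (abs_sub _ _).trans (le_of_eq ?_)
          simp only [abs_mul, abs_pow, abs_of_nonneg hC₀]; norm_num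
      _ ≤ 4 * μ₂ ^ 2 * |Q| + 6 * μ₂ * |P| ^ 2 := by gcongr
      _ = _ := by ring
  have hcoef : |2 * C * P * Q - 3 * P ^ 3| / lam + |4 * C ^ 2 * Q - 6 * C * P ^ 2| / 2 ≤
      (2 * μ₂ + 3) * (K₀ + μ₂) * (|Q| + |P| ^ 2) := by
    nlinarith [mul_nonneg (add_nonneg hK₀ hμ₂) (abs_nonneg Q),
      mul_nonneg (mul_nonneg hμ₂ (add_nonneg hK₀ hμ₂)) (sq_nonneg |P|)]
  rw [← mul_le_mul_iff_of_pos_left hlam]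
  calc _ ≤ _ := mul_abs_quadratic_form_le hlam _ _ U V
    _ ≤ (2 * μ₂ + 3) * (K₀ + μ₂) * (|Q| + |P| ^ 2) * (V ^ 2 + lam ^ 2 * U ^ 2) := by
        gcongr
    _ = _ := by field_simp

lemma hasDerivAt_taramaEnergy {c c₁ c₂ u u₁ : ℝ → ℝ} {lam t : ℝ}
    (hc : HasDerivAt c (c₁ t) t) (hc₁ : HasDerivAt c₁ (c₂ t) t) (hu : HasDerivAt u (u₁ t) t)
    (hu₁ : HasDerivAt u₁ (-(lam ^ 2 * c t ^ 2 * u t)) t) (hct : c t ≠ 0) :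
    HasDerivAt (fun s => taramaEnergy lam (c s) (c₁ s) (u s) (u₁ s))
      (taramaEnergyDeriv (c t) (c₁ t) (c₂ t) (u t) (u₁ t)) t := by
  have H := ((((hu₁.pow 2).div hc hct).add ((hc.const_mul (lam ^ 2)).mul (hu.pow 2))).add
    (((hc₁.pow 2).mul (hu.pow 2)).div ((hc.pow 3).const_mul 4) (by simpa))).add
    (((hc₁.mul hu).mul hu₁).div (hc.pow 2) (pow_ne_zero 2 hct))
  refine H.congr_deriv ?_
  simp only [Pi.pow_apply, Pi.mul_apply, taramaEnergyDeriv]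
  field_simp
  ring

lemma taramaEnergyDeriv_le {μ₁ μ₂ K₀ ε₀ lam C P Q U V : ℝ} (hμ₁ : 0 < μ₁) (hC₁ : μ₁ ≤ C)
    (hC₂ : C ≤ μ₂) (hP : |P| ≤ K₀ * lam) (hlam : 0 < lam) (hε₀ : 0 < ε₀)
    (hE : ε₀ * (V ^ 2 + lam ^ 2 * U ^ 2) ≤ taramaEnergy lam C P U V) :
    taramaEnergyDeriv C P Q U V ≤
      (2 * μ₂ + 3) * (K₀ + μ₂) / (4 * μ₁ ^ 4 * ε₀) / lam * taramaEnergy lam C P U V *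
        (|Q| + |P| ^ 2) := by
  have hC₀ : 0 ≤ C := hμ₁.le.trans hC₁
  have hK₀ : 0 ≤ K₀ := nonneg_of_mul_nonneg_left ((abs_nonneg P).trans hP) hlam
  have hF : V ^ 2 + lam ^ 2 * U ^ 2 ≤ taramaEnergy lam C P U V / ε₀ := by
    rwa [le_div_iff₀ hε₀, mul_comm]
  calc taramaEnergyDeriv C P Q U V
      ≤ |(2 * C * P * Q - 3 * P ^ 3) * U ^ 2 + (4 * C ^ 2 * Q - 6 * C * P ^ 2) * (U * V)| /
          (4 * μ₁ ^ 4) := by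
        rw [taramaEnergyDeriv]
        gcongr
        exact le_abs_self _
    _ ≤ (2 * μ₂ + 3) * (K₀ + μ₂) / lam * (taramaEnergy lam C P U V / ε₀) * (|Q| + |P| ^ 2) /
          (4 * μ₁ ^ 4) := by
        have hμ₂ : 0 ≤ μ₂ := hC₀.trans hC₂
        grw [abs_taramaEnergyDeriv_numerator_le hC₀ hC₂ hP hlam, hF]
    _ = _ := by field_simp

theorem stmt6_general (T₀ μ₁ μ₂ K₀ ε₀ lam b : ℝ) (hμ₁ : 0 < μ₁) (hμ : μ₁ < μ₂)
    (hK₀ : 0 < K₀) (hε₀ : 0 < ε₀) (hlam : 0 < lam) (hb : 0 < b)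
    (c u : ℝ → ℝ)
    (hc : ∀ t ∈ Set.Ioc 0 T₀, DifferentiableAt ℝ c t)
    (hc' : ∀ t ∈ Set.Ioc 0 T₀, DifferentiableAt ℝ (deriv c) t)
    (hccont : ContinuousOn (deriv (deriv c)) (Set.Ioc 0 T₀))
    (hcb : ∀ t ∈ Set.Icc b T₀, μ₁ ≤ c t ∧ c t ≤ μ₂)
    (hc'bound : ∀ t ∈ Set.Icc b T₀, |deriv c t| ≤ K₀ * lam)
    (hu : ∀ t ∈ Set.Ioc 0 T₀, DifferentiableAt ℝ u t)
    (hu' : ∀ t ∈ Set.Ioc 0 T₀, DifferentiableAt ℝ (deriv u) t)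
    (hode : ∀ t ∈ Set.Ioc 0 T₀, deriv (deriv u) t + lam ^ 2 * (c t) ^ 2 * u t = 0)
    (hequiv : ∀ t ∈ Set.Icc b T₀,
      ε₀ * ((deriv u t) ^ 2 + lam ^ 2 * (u t) ^ 2) ≤
        (deriv u t) ^ 2 / c t + lam ^ 2 * c t * (u t) ^ 2 +
          (deriv c t) ^ 2 * (u t) ^ 2 / (4 * (c t) ^ 3) +
          deriv c t * u t * deriv u t / (c t) ^ 2) :
    ∃ M₃ : ℝ, 0 < M₃ ∧
      (∀ t ∈ Set.Ioo b T₀,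
        deriv (fun s =>
            (deriv u s) ^ 2 / c s + lam ^ 2 * c s * (u s) ^ 2 +
              (deriv c s) ^ 2 * (u s) ^ 2 / (4 * (c s) ^ 3) +
              deriv c s * u s * deriv u s / (c s) ^ 2) t ≤
          M₃ / lam *
            ((deriv u t) ^ 2 / c t + lam ^ 2 * c t * (u t) ^ 2 +
              (deriv c t) ^ 2 * (u t) ^ 2 / (4 * (c t) ^ 3) +
              deriv c t * u t * deriv u t / (c t) ^ 2) *
            (|deriv (deriv c) t| + |deriv c t| ^ 2)) ∧
      (∀ t ∈ Set.Icc b T₀,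
        (deriv u t) ^ 2 / c t + lam ^ 2 * c t * (u t) ^ 2 +
            (deriv c t) ^ 2 * (u t) ^ 2 / (4 * (c t) ^ 3) +
            deriv c t * u t * deriv u t / (c t) ^ 2 ≤
          ((deriv u b) ^ 2 / c b + lam ^ 2 * c b * (u b) ^ 2 +
              (deriv c b) ^ 2 * (u b) ^ 2 / (4 * (c b) ^ 3) +
              deriv c b * u b * deriv u b / (c b) ^ 2) *
            Real.exp (M₃ / lam *
              ∫ s in b..T₀, |deriv (deriv c) s| + |deriv c s| ^ 2)) := by
  have hsub : Icc b T₀ ⊆ Ioc 0 T₀ := fun t ht => ⟨hb.trans_le ht.1, ht.2⟩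
  set E : ℝ → ℝ := fun s => taramaEnergy lam (c s) (deriv c s) (u s) (deriv u s)
  set h : ℝ → ℝ := fun s => |deriv (deriv c) s| + |deriv c s| ^ 2
  set M₃ := (2 * μ₂ + 3) * (K₀ + μ₂) / (4 * μ₁ ^ 4 * ε₀)
  have hM₃ : 0 < M₃ := by have := hμ₁.trans hμ; positivity
  have hE : ∀ t ∈ Icc b T₀, HasDerivAt E
      (taramaEnergyDeriv (c t) (deriv c t) (deriv (deriv c) t) (u t) (deriv u t)) t := by
    intro t ht
    have hu₁ : HasDerivAt (deriv u) (-(lam ^ 2 * c t ^ 2 * u t)) t := by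
      rw [← eq_neg_of_add_eq_zero_left (hode t (hsub ht))]
      exact (hu' t (hsub ht)).hasDerivAt
    exact hasDerivAt_taramaEnergy (hc t (hsub ht)).hasDerivAt (hc' t (hsub ht)).hasDerivAt
      (hu t (hsub ht)).hasDerivAt hu₁ (hμ₁.trans_le (hcb t ht).1).ne'
  have hE'le : ∀ t ∈ Icc b T₀,
      taramaEnergyDeriv (c t) (deriv c t) (deriv (deriv c) t) (u t) (deriv u t) ≤
        M₃ / lam * E t * h t := fun t ht =>
    taramaEnergyDeriv_le hμ₁ (hcb t ht).1 (hcb t ht).2 (hc'bound t ht) hlam hε₀ (hequiv t ht)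
  refine ⟨M₃, hM₃, fun t ht => (hE t (Ioo_subset_Icc_self ht)).deriv.trans_le
    (hE'le t (Ioo_subset_Icc_self ht)), fun t ht => ?_⟩
  have hc'cont : ContinuousOn (deriv c) (Icc b T₀) :=
    fun s hs => (hc' s (hsub hs)).continuousAt.continuousWithinAt
  have hh : ContinuousOn h (Icc b T₀) := (hccont.mono hsub).abs.add (hc'cont.abs.pow 2)
  have hgron := le_mul_exp_integral_of_hasDerivAt_le_of_nonneg (g := fun s => M₃ / lam * h s)
    (fun s hs => (hE s hs).continuousAt.continuousWithinAt)
    (fun s hs => hE s (Ioo_subset_Icc_self hs)) (continuousOn_const.mul hh)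
    (fun s hs => (hE'le s (Ioo_subset_Icc_self hs)).trans_eq (by ring))
    (fun s _ => by positivity)
    (le_trans (by positivity) (hequiv b (left_mem_Icc.2 (ht.1.trans ht.2)))) t ht
  rwa [intervalIntegral.integral_const_mul] at hgron

theorem stmt6 (T₀ μ₁ μ₂ K₀ ε₀ lam b : ℝ) (hT : 0 < T₀) (hμ₁ : 0 < μ₁) (hμ : μ₁ < μ₂)
    (hK₀ : 0 < K₀) (hε₀ : 0 < ε₀) (hlam : 0 < lam) (hb : 0 < b) (hbT : b < T₀)
    (c u : ℝ → ℝ)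
    (hc : ∀ t ∈ Set.Ioc 0 T₀, DifferentiableAt ℝ c t)
    (hc' : ∀ t ∈ Set.Ioc 0 T₀, DifferentiableAt ℝ (deriv c) t)
    (hccont : ContinuousOn (deriv (deriv c)) (Set.Ioc 0 T₀))
    (hcb : ∀ t ∈ Set.Icc b T₀, μ₁ ≤ c t ∧ c t ≤ μ₂)
    (hc'bound : ∀ t ∈ Set.Icc b T₀, |deriv c t| ≤ K₀ * lam)
    (hu : ∀ t ∈ Set.Ioc 0 T₀, DifferentiableAt ℝ u t)
    (hu' : ∀ t ∈ Set.Ioc 0 T₀, DifferentiableAt ℝ (deriv u) t)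
    (hode : ∀ t ∈ Set.Ioc 0 T₀, deriv (deriv u) t + lam ^ 2 * (c t) ^ 2 * u t = 0)
    (hequiv : ∀ t ∈ Set.Icc b T₀,
      ε₀ * ((deriv u t) ^ 2 + lam ^ 2 * (u t) ^ 2) ≤
        (deriv u t) ^ 2 / c t + lam ^ 2 * c t * (u t) ^ 2 +
          (deriv c t) ^ 2 * (u t) ^ 2 / (4 * (c t) ^ 3) +
          deriv c t * u t * deriv u t / (c t) ^ 2) :
    ∃ M₃ : ℝ, 0 < M₃ ∧
      (∀ t ∈ Set.Ioo b T₀,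
        deriv (fun s =>
            (deriv u s) ^ 2 / c s + lam ^ 2 * c s * (u s) ^ 2 +
              (deriv c s) ^ 2 * (u s) ^ 2 / (4 * (c s) ^ 3) +
              deriv c s * u s * deriv u s / (c s) ^ 2) t ≤
          M₃ / lam *
            ((deriv u t) ^ 2 / c t + lam ^ 2 * c t * (u t) ^ 2 +
              (deriv c t) ^ 2 * (u t) ^ 2 / (4 * (c t) ^ 3) +
              deriv c t * u t * deriv u t / (c t) ^ 2) *
            (|deriv (deriv c) t| + |deriv c t| ^ 2)) ∧
      (∀ t ∈ Set.Icc b T₀,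
        (deriv u t) ^ 2 / c t + lam ^ 2 * c t * (u t) ^ 2 +
            (deriv c t) ^ 2 * (u t) ^ 2 / (4 * (c t) ^ 3) +
            deriv c t * u t * deriv u t / (c t) ^ 2 ≤
          ((deriv u b) ^ 2 / c b + lam ^ 2 * c b * (u b) ^ 2 +
              (deriv c b) ^ 2 * (u b) ^ 2 / (4 * (c b) ^ 3) +
              deriv c b * u b * deriv u b / (c b) ^ 2) *
            Real.exp (M₃ / lam *
              ∫ s in b..T₀, |deriv (deriv c) s| + |deriv c s| ^ 2)) :=
  stmt6_general T₀ μ₁ μ₂ K₀ ε₀ lam b hμ₁ hμ hK₀ hε₀ hlam hb c u hc hc' hccont hcb hc'bound hu hu'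
    hode hequiv
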